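/- For every real q > 0 with q ≠ 1 and all real numbers j, a, b, the following algebraic identity holds: (q² − 1)·q^{a−b−(2j+1)}·[j+a]_q·[j−b]_q + (q⁻² − 1)·q^{a−b+(2j+1)}·[j−a]_q·[j+b]_q = [2j]_q·(q^{2a} + q^{−2b}) − [4j]_q. (This is the key computation behind the microscopic Hopf–Cole / Gärtner transform of ASEP(q,j).) -/

import Mathlib

/-- The `q`-number `[n]_q = (q^n - q^(-n))/(q - q⁻¹)` for real `n`. -/
noncomputable def qNum (q n : ℝ) : ℝ := (q ^ n - q ^ (-n)) / (q - q⁻¹)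

/-!
Writing `A = q^a`, `B = q^b`, `J = q^j`, every term is a Laurent monomial in `q, A, B, J`
divided by a power of `q - q⁻¹`. Since `q² - 1 = q (q - q⁻¹)` and `q⁻² - 1 = -q⁻¹ (q - q⁻¹)`,
one factor `q - q⁻¹` cancels on the left, and what remains is a Laurent polynomial identity.
When `q - q⁻¹ = 0` both sides vanish.
-/

open Real

theorem gartner_identity_laurent {K : Type*} [Field K] {q A B J : K} (hq : q ≠ 0)
    (hA : A ≠ 0) (hB : B ≠ 0) (hJ : J ≠ 0) :
    (q ^ 2 - 1) * (A * B⁻¹ * (J ^ 2 * q)⁻¹) * ((J * A - (J * A)⁻¹) / (q - q⁻¹))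
        * ((J * B⁻¹ - (J * B⁻¹)⁻¹) / (q - q⁻¹))
      + ((q ^ 2)⁻¹ - 1) * (A * B⁻¹ * (J ^ 2 * q)) * ((J * A⁻¹ - (J * A⁻¹)⁻¹) / (q - q⁻¹))
        * ((J * B - (J * B)⁻¹) / (q - q⁻¹))
      = (J ^ 2 - (J ^ 2)⁻¹) / (q - q⁻¹) * (A ^ 2 + (B ^ 2)⁻¹)
        - (J ^ 4 - (J ^ 4)⁻¹) / (q - q⁻¹) := by
  rcases eq_or_ne (q - q⁻¹) 0 with hd | hd
  · have hq2 : q ^ 2 = 1 := by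
      field_simp at hd
      linear_combination hd
    simp [hd, hq2]
  · have hq2 : q ^ 2 - 1 ≠ 0 := by
      contrapose! hd
      field_simp
      linear_combination hd
    field_simp
    ring

theorem stmt0 (q : ℝ) (hq : 0 < q) (j a b : ℝ) :
    (q ^ (2:ℝ) - 1) * q ^ (a - b - (2*j + 1)) * qNum q (j + a) * qNum q (j - b)
      + (q ^ (-2:ℝ) - 1) * q ^ (a - b + (2*j + 1)) * qNum q (j - a) * qNum q (j + b)
    = qNum q (2*j) * (q ^ (2*a) + q ^ (-2*b)) - qNum q (4*j) := by
  have rpow_natCast_mul' (n : ℕ) (x : ℝ) : q ^ ((n : ℝ) * x) = (q ^ x) ^ n := by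
    rw [mul_comm, rpow_mul_natCast hq.le]
  simp only [qNum, rpow_add hq, rpow_sub hq, rpow_neg hq.le, neg_mul, rpow_one, rpow_two]
  simp only [show (2:ℝ) = ((2:ℕ):ℝ) by norm_num, show (4:ℝ) = ((4:ℕ):ℝ) by norm_num,
    rpow_natCast_mul']
  exact gartner_identity_laurent hq.ne' (rpow_pos_of_pos hq a).ne' (rpow_pos_of_pos hq b).ne'
    (rpow_pos_of_pos hq j).ne'
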